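/- Let {(P^t, X^t)}_{t=1}^T be a trade statistics and let U^1,…,U^T ∈ ℝ and λ^1,…,λ^T > 0 satisfy the Afriat inequalities U^t ≤ U^s + λ^s(⟨P^s, X^t⟩ − ⟨P^s, X^s⟩) for all t, s ∈ {1,…,T}. Then the function F_G(X) = min_{s ∈ {1,…,T}} {U^s + λ^s(⟨P^s, X⟩ − ⟨P^s, X^s⟩)} is continuous, concave, and monotone on ℝ^m_+ and rationalizes the trade statistics, i.e. for every t ∈ {1,…,T}, X^t maximizes F_G over {X ∈ ℝ^m_+ : ⟨P^t, X⟩ ≤ ⟨P^t, X^t⟩}. -/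
import Mathlib


open scoped BigOperators

noncomputable section

/-- Euclidean scalar product of two vectors indexed by `ι`. -/
def dotp {ι : Type*} [Fintype ι] (P X : ι → ℝ) : ℝ := ∑ i, P i * X i

/-- `ℝ^ι_+` : the set of nonnegative, nonzero vectors. -/
def Rplus (ι : Type*) [Fintype ι] : Set (ι → ℝ) := {X | 0 ≤ X ∧ X ≠ 0}

/-- The class `Φ_G` of nonnegative, nonsatiated, continuous, concave, monotone utility
functions on `ℝ^ι_+` which are positive on the interior of `ℝ^ι_+`. -/
structure IsPhiG {ι : Type*} [Fintype ι] (u : (ι → ℝ) → ℝ) : Prop where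
  nonneg : ∀ X ∈ Rplus ι, 0 ≤ u X
  cont : ContinuousOn u (Rplus ι)
  concave : ∀ X ∈ Rplus ι, ∀ Y ∈ Rplus ι, ∀ a b : ℝ,
    0 ≤ a → 0 ≤ b → a + b = 1 → a * u X + b * u Y ≤ u (a • X + b • Y)
  mono : ∀ X ∈ Rplus ι, ∀ Y ∈ Rplus ι, X ≤ Y → u X ≤ u Y
  pos : ∀ X ∈ interior (Rplus ι), 0 < u X
  nonsatiated : ∀ X ∈ Rplus ι, ∀ ε : ℝ, 0 < ε → ∃ Y ∈ Rplus ι, dist Y X < ε ∧ u X < u Y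

/-- The class `Φ_H` : functions in `Φ_G` that are positively homogeneous of degree 1. -/
def IsPhiH {ι : Type*} [Fintype ι] (u : (ι → ℝ) → ℝ) : Prop :=
  IsPhiG u ∧ ∀ X ∈ Rplus ι, ∀ α : ℝ, 0 < α → u (α • X) = α * u X

lemma dotp_smul_add {ι : Type*} [Fintype ι] (P Y Z : ι → ℝ) (a b : ℝ) :
    dotp P (a • Y + b • Z) = a * dotp P Y + b * dotp P Z := by
  simp only [dotp, Pi.add_apply, Pi.smul_apply, smul_eq_mul, Finset.mul_sum,
    ← Finset.sum_add_distrib]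
  exact Finset.sum_congr rfl fun i _ => by ring

lemma dotp_mono {ι : Type*} [Fintype ι] (P Y Z : ι → ℝ) (hP : ∀ i, 0 ≤ P i)
    (h : Y ≤ Z) : dotp P Y ≤ dotp P Z :=
  Finset.sum_le_sum fun i _ => mul_le_mul_of_nonneg_left (h i) (hP i)

/-- The Afriat polyhedral utility function `F_G` is continuous, concave and
monotone on `ℝ^m_+` and rationalizes the trade statistics. -/
theorem afriat_function_rationalizes {m T : ℕ} (hT : 0 < T) (P X : Fin T → Fin m → ℝ)
    (hP : ∀ t i, 0 < P t i) (hX : ∀ t, X t ∈ Rplus (Fin m))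
    (U lam : Fin T → ℝ) (hlam : ∀ t, 0 < lam t)
    (hAfriat : ∀ t s : Fin T, U t ≤ U s + lam s * (dotp (P s) (X t) - dotp (P s) (X s)))
    (F : (Fin m → ℝ) → ℝ)
    (hFdef : ∀ Z, F Z = ⨅ s : Fin T, (U s + lam s * (dotp (P s) Z - dotp (P s) (X s)))) :
    ContinuousOn F (Rplus (Fin m)) ∧
    (∀ Y ∈ Rplus (Fin m), ∀ Z ∈ Rplus (Fin m), ∀ a b : ℝ,
      0 ≤ a → 0 ≤ b → a + b = 1 → a * F Y + b * F Z ≤ F (a • Y + b • Z)) ∧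
    (∀ Y ∈ Rplus (Fin m), ∀ Z ∈ Rplus (Fin m), Y ≤ Z → F Y ≤ F Z) ∧
    (∀ t, ∀ Y ∈ Rplus (Fin m), dotp (P t) Y ≤ dotp (P t) (X t) → F Y ≤ F (X t)) := by
  haveI : Nonempty (Fin T) := ⟨⟨0, hT⟩⟩
  set g : Fin T → (Fin m → ℝ) → ℝ :=
    fun s Z => U s + lam s * (dotp (P s) Z - dotp (P s) (X s)) with hg
  have hF : ∀ Z, F Z = ⨅ s, g s Z := hFdef
  have hbdd : ∀ Z, BddBelow (Set.range fun s => g s Z) := fun Z =>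
    (Set.finite_range _).bddBelow
  have hFle : ∀ Z s, F Z ≤ g s Z := fun Z s => by
    rw [hF]; exact ciInf_le (hbdd Z) s
  have hleF : ∀ Z c, (∀ s, c ≤ g s Z) → c ≤ F Z := fun Z c h => by
    rw [hF]; exact le_ciInf h
  -- value at X t
  have hFX : ∀ t, F (X t) = U t := fun t => by
    refine le_antisymm ?_ (hleF _ _ fun s => hAfriat t s)
    have := hFle (X t) t
    simpa [hg] using this
  refine ⟨?_, ?_, ?_, ?_⟩
  · -- continuity
    have : ContinuousOn (fun Z => Finset.univ.inf' Finset.univ_nonempty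
        (fun s => g s Z)) (Rplus (Fin m)) := by
      apply ContinuousOn.finset_inf'_apply Finset.univ_nonempty
      intro s _
      apply Continuous.continuousOn
      have hdc : Continuous fun Z : Fin m → ℝ => dotp (P s) Z := by
        unfold dotp
        exact continuous_finset_sum _ fun i _ =>
          (continuous_const.mul (continuous_apply i))
      continuity
    have heq : ∀ Z, F Z = Finset.univ.inf' Finset.univ_nonempty (fun s => g s Z) := by
      intro Z
      rw [hF, Finset.inf'_univ_eq_ciInf]
    exact ContinuousOn.congr this fun Z _ => heq Z
  · -- concavity
    intro Y _ Z _ a b ha hb hab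
    refine hleF _ _ fun s => ?_
    have h1 : a * F Y ≤ a * g s Y := mul_le_mul_of_nonneg_left (hFle Y s) ha
    have h2 : b * F Z ≤ b * g s Z := mul_le_mul_of_nonneg_left (hFle Z s) hb
    have h3 : g s (a • Y + b • Z) = a * g s Y + b * g s Z := by
      simp only [hg, dotp_smul_add]
      rw [show b = 1 - a by linarith]
      ring
    rw [h3]; linarith
  · -- monotone
    intro Y _ Z _ hYZ
    refine hleF _ _ fun s => ?_
    refine (hFle Y s).trans ?_
    have := dotp_mono (P s) Y Z (fun i => (hP s i).le) hYZ
    have hl := (hlam s).le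
    simp only [hg]
    nlinarith
  · -- rationalizes
    intro t Y _ hbud
    rw [hFX t]
    refine (hFle Y t).trans ?_
    have := mul_le_mul_of_nonneg_left (sub_nonpos.mpr hbud) (hlam t).le
    simp only [hg]
    nlinarith
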